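/- (Theorem 3) Let 1 ≤ m ≤ n. Let A be an m×(n−1) binary matrix with guard bits a_{i,−1} = 1 and a_{i,n−1} = 0, let B be an (m−1)×n binary matrix with guard bits b_{−1,j} = 1 and b_{m−1,j} = 0, and let X = (x_{i,j}) be an m×n binary matrix. Define Δa_{i,j} = a_{i,j−1} − a_{i,j} and Δb_{i,j} = b_{i−1,j} − b_{i,j} for 0 ≤ i ≤ m−1 and 0 ≤ j ≤ n−1, and set E_e^{mn}(A,B,X) = (1/2)·Σ_{i,j} (Δa_{i,j})^2 + (1/2)·Σ_{i,j} (Δb_{i,j})^2 + Σ_{i,j} (x_{i,j} − Δa_{i,j})^2 + Σ_{i,j} x_{i,j}·(1 − Δb_{i,j}). Then E_e^{mn}(A,B,X) ≥ (m+n)/2, and E_e^{mn}(A,B,X) = (m+n)/2 if and only if A, B, and X satisfy the row domain-wall condition, the column domain-wall condition, the dual-permutation condition, and the one-hot permutation condition. -/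

import Mathlib

/-! Every guard-extended row of `A` telescopes, so `∑ⱼ Δa_{i,j} = 1`; likewise `∑ᵢ Δb_{i,j} = 1`.
Subtracting these linear sums, `2 E_e - (m + n)` becomes the sum over all entries of
`(Δa² - Δa) + (Δb² - Δb) + 2 (x - Δa)² + 2 x (1 - Δb)`, and each of these four terms is
nonnegative because the entries are integers, `x` is binary and `Δb ≤ 1`. Equality forces every
term to vanish: `Δa, Δb ∈ {0, 1}`, `x = Δa` and `x = 1 → Δb = 1`. A binary sequence between the
guards `1` and `0` has all its steps in `{0, 1}` exactly when it is antitone, i.e. a domain wall. -/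

/-- Guard-extended row of the matrix `A` (rows of length `n-1`, guard bits
`a_{i,-1} = 1` at shifted index `0` and `a_{i,n-1} = 0` at shifted index `n`). -/
def gA (n : ℕ) (A : ℕ → ℕ → ℤ) (i j : ℕ) : ℤ :=
  if j = 0 then 1 else if j < n then A i (j - 1) else 0

/-- `Δa_{i,j} = a_{i,j-1} - a_{i,j}` computed on the guard-extended rows of `A`. -/
def dA (n : ℕ) (A : ℕ → ℕ → ℤ) (i j : ℕ) : ℤ := gA n A i j - gA n A i (j + 1)

/-- Guard-extended column of the matrix `B` (columns of length `m-1`, guard bits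
`b_{-1,j} = 1` at shifted index `0` and `b_{m-1,j} = 0` at shifted index `m`). -/
def gB (m : ℕ) (B : ℕ → ℕ → ℤ) (i j : ℕ) : ℤ :=
  if i = 0 then 1 else if i < m then B (i - 1) j else 0

/-- `Δb_{i,j} = b_{i-1,j} - b_{i,j}` computed on the guard-extended columns of `B`. -/
def dB (m : ℕ) (B : ℕ → ℕ → ℤ) (i j : ℕ) : ℤ := gB m B i j - gB m B (i + 1) j

/-- Row domain-wall condition: every guard-extended row of the `m × (n-1)` matrix `A`
is a domain-wall vector. -/
def RowDW (m n : ℕ) (A : ℕ → ℕ → ℤ) : Prop :=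
  ∀ i < m, ∃ t ≤ n - 1, ∀ j < n - 1, (j < t → A i j = 1) ∧ (t ≤ j → A i j = 0)

/-- Column domain-wall condition: every guard-extended column of the `(m-1) × n` matrix `B`
is a domain-wall vector. -/
def ColDW (m n : ℕ) (B : ℕ → ℕ → ℤ) : Prop :=
  ∀ j < n, ∃ t ≤ m - 1, ∀ i < m - 1, (i < t → B i j = 1) ∧ (t ≤ i → B i j = 0)

/-- The extended dual-matrix domain-wall QUBO energy for partial permutations:
`E_eᵐⁿ(A,B,X) = ½ ΣΣ (Δa)² + ½ ΣΣ (Δb)² + ΣΣ (x - Δa)² + ΣΣ x·(1 - Δb)`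
over `0 ≤ i ≤ m-1` and `0 ≤ j ≤ n-1`. -/
def Ee (m n : ℕ) (A B X : ℕ → ℕ → ℤ) : ℚ :=
  (1 / 2 : ℚ) * ∑ i ∈ Finset.range m, ∑ j ∈ Finset.range n, (dA n A i j : ℚ) ^ 2 +
  (1 / 2 : ℚ) * ∑ i ∈ Finset.range m, ∑ j ∈ Finset.range n, (dB m B i j : ℚ) ^ 2 +
  ∑ i ∈ Finset.range m, ∑ j ∈ Finset.range n, ((X i j : ℚ) - (dA n A i j : ℚ)) ^ 2 +
  ∑ i ∈ Finset.range m, ∑ j ∈ Finset.range n, (X i j : ℚ) * (1 - (dB m B i j : ℚ))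

/-- Dual-permutation condition: for all `i < m` and `j < n`, if `Δa_{i,j} = 1` then
`Δb_{i,j} = 1`. -/
def DualPerm (m n : ℕ) (A B : ℕ → ℕ → ℤ) : Prop :=
  ∀ i < m, ∀ j < n, dA n A i j = 1 → dB m B i j = 1

/-- One-hot permutation condition: `x_{i,j} = Δa_{i,j}` for all `i < m`, `j < n`. -/
def OneHotPerm (m n : ℕ) (A X : ℕ → ℕ → ℤ) : Prop :=
  ∀ i < m, ∀ j < n, X i j = dA n A i j

def IsDomainWall (k : ℕ) (x : ℕ → ℤ) : Prop :=
  ∃ t ≤ k, ∀ j < k, (j < t → x j = 1) ∧ (t ≤ j → x j = 0)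

def guarded (n : ℕ) (x : ℕ → ℤ) (j : ℕ) : ℤ :=
  if j = 0 then 1 else if j < n then x (j - 1) else 0

section Guarded

variable {n : ℕ} {x : ℕ → ℤ}

@[simp]
lemma guarded_zero : guarded n x 0 = 1 := rfl

lemma guarded_of_le {k : ℕ} (hn : 1 ≤ n) (hk : n ≤ k) : guarded n x k = 0 := by
  simp only [guarded]
  rw [if_neg (by omega), if_neg (by omega)]

lemma guarded_succ {j : ℕ} (hj : j < n - 1) : guarded n x (j + 1) = x j := by
  simp only [guarded]
  rw [if_neg (by omega), if_pos (by omega), Nat.add_sub_cancel]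

lemma guarded_binary (hx : ∀ j < n - 1, x j = 0 ∨ x j = 1) (k : ℕ) :
    guarded n x k = 0 ∨ guarded n x k = 1 := by
  unfold guarded
  split_ifs
  · exact Or.inr rfl
  · exact hx (k - 1) (by omega)
  · exact Or.inl rfl

lemma sum_range_guarded_sub (hn : 1 ≤ n) :
    ∑ j ∈ Finset.range n, (guarded n x j - guarded n x (j + 1)) = 1 := by
  rw [Finset.sum_range_sub', guarded_zero, guarded_of_le hn le_rfl, sub_zero]

lemma guarded_eq_ite_of_isDomainWall {t : ℕ} (hn : 1 ≤ n) (ht : t ≤ n - 1)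
    (hx : ∀ j < n - 1, (j < t → x j = 1) ∧ (t ≤ j → x j = 0)) {k : ℕ} (hk : k ≤ n) :
    guarded n x k = if k ≤ t then 1 else 0 := by
  rcases k with _ | j
  · simp
  by_cases hj : j < n - 1
  · rw [guarded_succ hj]
    split_ifs with h
    · exact (hx j hj).1 (by omega)
    · exact (hx j hj).2 (by omega)
  · rw [guarded_of_le hn (by omega), if_neg (by omega)]

theorem isDomainWall_iff_guarded_steps (hn : 1 ≤ n) (hx : ∀ j < n - 1, x j = 0 ∨ x j = 1) :
    IsDomainWall (n - 1) x ↔ ∀ j < n,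
      guarded n x j - guarded n x (j + 1) = 0 ∨ guarded n x j - guarded n x (j + 1) = 1 := by
  constructor
  · rintro ⟨t, ht, hwall⟩ j hj
    rw [guarded_eq_ite_of_isDomainWall hn ht hwall hj.le,
      guarded_eq_ite_of_isDomainWall hn ht hwall (by omega : j + 1 ≤ n)]
    split_ifs <;> omega
  · intro hsteps
    have hbin := guarded_binary hx
    -- the guard `0` at position `n` makes the guarded sequence antitone on all of `ℕ`
    have hanti : Antitone (guarded n x) := antitone_nat_of_succ_le fun j => by
      by_cases hj : j < n
      · have := hsteps j hj
        omega
      · rw [guarded_of_le hn (by omega), guarded_of_le hn (by omega)]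
    have hlast : guarded n x (n - 1 + 1) = 0 := guarded_of_le hn (by omega)
    have hzero : ∃ k, guarded n x (k + 1) = 0 := ⟨n - 1, hlast⟩
    classical
    refine ⟨Nat.find hzero, Nat.find_min' hzero hlast, fun j hj => ⟨fun hjt => ?_, fun htj => ?_⟩⟩
    · have := Nat.find_min hzero hjt
      have := hbin (j + 1)
      rw [← guarded_succ (x := x) hj]
      omega
    · have hle := hanti (Nat.add_le_add_right htj 1)
      rw [Nat.find_spec hzero] at hle
      have := hbin (j + 1)
      rw [← guarded_succ (x := x) hj]
      omega

end Guarded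

lemma dA_eq_guarded_sub (n : ℕ) (A : ℕ → ℕ → ℤ) (i j : ℕ) :
    dA n A i j = guarded n (A i) j - guarded n (A i) (j + 1) := rfl

lemma dB_eq_guarded_sub (m : ℕ) (B : ℕ → ℕ → ℤ) (i j : ℕ) :
    dB m B i j = guarded m (fun k => B k j) i - guarded m (fun k => B k j) (i + 1) := rfl

lemma rowDW_iff {m n : ℕ} (hn : 1 ≤ n) {A : ℕ → ℕ → ℤ}
    (hA : ∀ i < m, ∀ j < n - 1, A i j = 0 ∨ A i j = 1) :
    RowDW m n A ↔ ∀ i < m, ∀ j < n, dA n A i j = 0 ∨ dA n A i j = 1 :=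
  forall₂_congr fun i hi => isDomainWall_iff_guarded_steps hn (hA i hi)

lemma colDW_iff {m n : ℕ} (hm : 1 ≤ m) {B : ℕ → ℕ → ℤ}
    (hB : ∀ i < m - 1, ∀ j < n, B i j = 0 ∨ B i j = 1) :
    ColDW m n B ↔ ∀ i < m, ∀ j < n, dB m B i j = 0 ∨ dB m B i j = 1 :=
  (forall₂_congr fun j hj =>
    isDomainWall_iff_guarded_steps (x := fun i => B i j) hm fun i hi => hB i hi j hj).trans
    ⟨fun h i hi j hj => h j hj i hi, fun h j hj i hi => h i hi j hj⟩

def entryExcess (a b x : ℤ) : ℤ :=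
  (a ^ 2 - a) + (b ^ 2 - b) + 2 * (x - a) ^ 2 + 2 * (x * (1 - b))

section EntryExcess

variable {a b x : ℤ}

lemma sq_sub_self_nonneg (a : ℤ) : 0 ≤ a ^ 2 - a := sub_nonneg.mpr (Int.le_self_sq a)

lemma sq_sub_self_eq_zero_iff : a ^ 2 - a = 0 ↔ a = 0 ∨ a = 1 := by
  rw [show a ^ 2 - a = a * (a - 1) by ring, mul_eq_zero, sub_eq_zero]

lemma mul_one_sub_nonneg (hx : x = 0 ∨ x = 1) (hb : b ≤ 1) : 0 ≤ x * (1 - b) := by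
  rcases hx with rfl | rfl <;> omega

lemma entryExcess_nonneg (hx : x = 0 ∨ x = 1) (hb : b ≤ 1) : 0 ≤ entryExcess a b x := by
  unfold entryExcess
  have := sq_sub_self_nonneg a
  have := sq_sub_self_nonneg b
  have := sq_nonneg (x - a)
  have := mul_one_sub_nonneg hx hb
  linarith

lemma entryExcess_eq_zero_iff (hx : x = 0 ∨ x = 1) (hb : b ≤ 1) :
    entryExcess a b x = 0 ↔ (a = 0 ∨ a = 1) ∧ (b = 0 ∨ b = 1) ∧ (a = 1 → b = 1) ∧ x = a := by
  have ha := sq_sub_self_nonneg a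
  have hb' := sq_sub_self_nonneg b
  have hxa := sq_nonneg (x - a)
  have hxb := mul_one_sub_nonneg hx hb
  have hsplit : entryExcess a b x = 0 ↔
      a ^ 2 - a = 0 ∧ b ^ 2 - b = 0 ∧ (x - a) ^ 2 = 0 ∧ x * (1 - b) = 0 := by
    unfold entryExcess
    constructor
    · intro h
      refine ⟨?_, ?_, ?_, ?_⟩ <;> linarith
    · rintro ⟨h1, h2, h3, h4⟩
      rw [h1, h2, h3, h4]
      ring
  rw [hsplit, sq_sub_self_eq_zero_iff, sq_sub_self_eq_zero_iff, pow_eq_zero_iff two_ne_zero,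
    sub_eq_zero, mul_eq_zero, sub_eq_zero]
  constructor
  · rintro ⟨ha, hb, rfl, hxb⟩
    exact ⟨ha, hb, fun h => hxb.resolve_left (by omega) |>.symm, rfl⟩
  · rintro ⟨ha, hb, hab, rfl⟩
    refine ⟨ha, hb, rfl, ?_⟩
    rcases ha with ha | ha
    · exact Or.inl ha
    · exact Or.inr (hab ha).symm

end EntryExcess

lemma Ee_eq_add_sum_entryExcess {m n : ℕ} (hm : 1 ≤ m) (hn : 1 ≤ n) (A B X : ℕ → ℕ → ℤ) :
    Ee m n A B X = ((m : ℚ) + n) / 2 + ((∑ i ∈ Finset.range m, ∑ j ∈ Finset.range n,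
      entryExcess (dA n A i j) (dB m B i j) (X i j) : ℤ) : ℚ) / 2 := by
  have hsumA : ∑ i ∈ Finset.range m, ∑ j ∈ Finset.range n, dA n A i j = m := by
    simp only [dA_eq_guarded_sub, sum_range_guarded_sub hn, Finset.sum_const, Finset.card_range,
      nsmul_eq_mul, mul_one]
  have hsumB : ∑ i ∈ Finset.range m, ∑ j ∈ Finset.range n, dB m B i j = n := by
    rw [Finset.sum_comm]
    simp only [dB_eq_guarded_sub, sum_range_guarded_sub hm, Finset.sum_const, Finset.card_range,
      nsmul_eq_mul, mul_one]
  unfold Ee entryExcess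
  push_cast [Finset.sum_add_distrib, Finset.sum_sub_distrib, ← Finset.mul_sum]
  have hA' := congrArg (Int.cast : ℤ → ℚ) hsumA
  have hB' := congrArg (Int.cast : ℤ → ℚ) hsumB
  push_cast at hA' hB'
  rw [hA', hB']
  ring

lemma dB_le_one {m n : ℕ} {B : ℕ → ℕ → ℤ} (hB : ∀ i < m - 1, ∀ j < n, B i j = 0 ∨ B i j = 1)
    (i : ℕ) {j : ℕ} (hj : j < n) : dB m B i j ≤ 1 := by
  have hbin := guarded_binary (x := fun k => B k j) fun k hk => hB k hk j hj
  have := hbin i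
  have := hbin (i + 1)
  rw [dB_eq_guarded_sub]
  omega

lemma sum_range_sum_range_eq_zero_iff {M : Type*} [AddCommMonoid M] [PartialOrder M]
    [IsOrderedAddMonoid M] {m n : ℕ} {f : ℕ → ℕ → M} (hf : ∀ i < m, ∀ j < n, 0 ≤ f i j) :
    ∑ i ∈ Finset.range m, ∑ j ∈ Finset.range n, f i j = 0 ↔ ∀ i < m, ∀ j < n, f i j = 0 := by
  have hf' : ∀ i ∈ Finset.range m, ∀ j ∈ Finset.range n, 0 ≤ f i j := by
    simpa only [Finset.mem_range] using hf
  rw [Finset.sum_eq_zero_iff_of_nonneg fun i hi => Finset.sum_nonneg (hf' i hi)]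
  refine (forall₂_congr fun i hi => Finset.sum_eq_zero_iff_of_nonneg (hf' i hi)).trans ?_
  simp only [Finset.mem_range]

/-- Theorem 3: `E_eᵐⁿ(A,B,X) ≥ (m+n)/2`, with equality iff `A`, `B`, and `X` satisfy the
row domain-wall, column domain-wall, dual-permutation, and one-hot permutation
conditions. -/
theorem Ee_min_iff_conditions (m n : ℕ) (hm : 1 ≤ m) (hmn : m ≤ n)
    (A B X : ℕ → ℕ → ℤ)
    (hA : ∀ i < m, ∀ j < n - 1, A i j = 0 ∨ A i j = 1)
    (hB : ∀ i < m - 1, ∀ j < n, B i j = 0 ∨ B i j = 1)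
    (hX : ∀ i < m, ∀ j < n, X i j = 0 ∨ X i j = 1) :
    ((m : ℚ) + n) / 2 ≤ Ee m n A B X ∧
    (Ee m n A B X = ((m : ℚ) + n) / 2 ↔
      RowDW m n A ∧ ColDW m n B ∧ DualPerm m n A B ∧ OneHotPerm m n A X) := by
  have hn : 1 ≤ n := hm.trans hmn
  have hexcess : ∀ i < m, ∀ j < n, 0 ≤ entryExcess (dA n A i j) (dB m B i j) (X i j) :=
    fun i hi j hj => entryExcess_nonneg (hX i hi j hj) (dB_le_one hB i hj)
  have hsum_nonneg : 0 ≤ ∑ i ∈ Finset.range m, ∑ j ∈ Finset.range n,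
      entryExcess (dA n A i j) (dB m B i j) (X i j) :=
    Finset.sum_nonneg fun i hi => Finset.sum_nonneg fun j hj =>
      hexcess i (Finset.mem_range.1 hi) j (Finset.mem_range.1 hj)
  rw [Ee_eq_add_sum_entryExcess hm hn]
  refine ⟨by linarith [Int.cast_nonneg (R := ℚ) hsum_nonneg], ?_⟩
  rw [add_eq_left, div_eq_zero_iff, or_iff_left two_ne_zero, Int.cast_eq_zero,
    sum_range_sum_range_eq_zero_iff hexcess, rowDW_iff hn hA, colDW_iff hm hB]
  calc (∀ i < m, ∀ j < n, entryExcess (dA n A i j) (dB m B i j) (X i j) = 0)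
      ↔ ∀ i < m, ∀ j < n, (dA n A i j = 0 ∨ dA n A i j = 1) ∧ (dB m B i j = 0 ∨ dB m B i j = 1) ∧
        (dA n A i j = 1 → dB m B i j = 1) ∧ X i j = dA n A i j :=
      forall₂_congr fun i hi => forall₂_congr fun j hj =>
        entryExcess_eq_zero_iff (hX i hi j hj) (dB_le_one hB i hj)
    _ ↔ _ := by simp only [DualPerm, OneHotPerm, imp_and, forall_and]
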